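/- arXiv:1209.5531 — 7 statements merged into one kernel-verified Lean document; each statement's English description precedes it below -/
import Mathlib

section
/- Let G be a group, p a prime, and S a Sylow p-subgroup of G. Suppose the Thompson subgroup J(S) (the subgroup generated by all abelian subgroups of S of maximal order) is abelian, and suppose a, b ∈ J(S) are conjugate in G. Then a and b are conjugate by an element of the normalizer N_G(J(S)). -/
/-- The Thompson subgroup of `S`: the subgroup generated by all abelian subgroups of `S`
of maximal order among abelian subgroups of `S`. -/
def ThompsonSubgroup {G : Type*} [Group G] (S : Subgroup G) : Subgroup G :=
  ⨆ A ∈ {A : Subgroup G | A ≤ S ∧ IsMulCommutative A ∧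
      ∀ B : Subgroup G, B ≤ S → IsMulCommutative B → Nat.card B ≤ Nat.card A}, A

open Pointwise MulAction

theorem stmt_0 {G : Type*} [Group G] [Finite G] {p : ℕ} [Fact p.Prime]
    (S : Sylow p G)
    (hab : IsMulCommutative (ThompsonSubgroup (S : Subgroup G)))
    {a b : G} (ha : a ∈ ThompsonSubgroup (S : Subgroup G))
    (hb : b ∈ ThompsonSubgroup (S : Subgroup G))
    (hconj : ∃ g : G, g⁻¹ * a * g = b) :
    ∃ n ∈ Subgroup.normalizer (ThompsonSubgroup (S : Subgroup G) : Set G), n⁻¹ * a * n = b := by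
  classical
  set J : Subgroup G := ThompsonSubgroup (S : Subgroup G) with hJdef
  haveI : IsMulCommutative J := hab
  -- J ≤ S
  have hJS : J ≤ (S : Subgroup G) := by
    rw [hJdef, ThompsonSubgroup]
    exact iSup₂_le fun A hA => hA.1
  -- a maximal abelian subgroup of S exists
  have : Nonempty {A : Subgroup G // A ≤ (S : Subgroup G) ∧ IsMulCommutative A} :=
    ⟨⟨⊥, bot_le, ⟨⟨fun x y => Subtype.ext (by
      have hx := x.2; have hy := y.2
      simp only [Subgroup.mem_bot] at hx hy
      simp [hx, hy])⟩⟩⟩⟩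
  obtain ⟨⟨A, hAS, hAc⟩, hAmax⟩ :=
    Finite.exists_max (fun A : {A : Subgroup G // A ≤ (S : Subgroup G) ∧ IsMulCommutative A} =>
      Nat.card A.1)
  have hAmem : A ∈ {A : Subgroup G | A ≤ (S : Subgroup G) ∧ IsMulCommutative A ∧
      ∀ B : Subgroup G, B ≤ (S : Subgroup G) → IsMulCommutative B → Nat.card B ≤ Nat.card A} :=
    ⟨hAS, hAc, fun B hB hBc => hAmax ⟨B, hB, hBc⟩⟩
  have hAJ : A ≤ J := by
    rw [hJdef, ThompsonSubgroup]
    exact le_iSup₂ (f := fun A _ => A) A hAmem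
  have hJcard : ∀ B : Subgroup G, B ≤ (S : Subgroup G) → IsMulCommutative B →
      Nat.card B ≤ Nat.card J :=
    fun B hB hBc => (hAmax ⟨B, hB, hBc⟩).trans (Subgroup.card_le_of_le hAJ)
  -- cardinality of a conjugate
  have hcard_smul : ∀ x : G, Nat.card (MulAut.conj x • J : Subgroup G) = Nat.card J :=
    fun x => (Nat.card_congr (Subgroup.equivSMul (MulAut.conj x) J).toEquiv).symm
  have hcomm_smul : ∀ x : G, IsMulCommutative (MulAut.conj x • J : Subgroup G) := fun x => by
    rw [Subgroup.pointwise_smul_def]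
    exact Subgroup.map_isMulCommutative (H := J) _
  -- core weak closure: a conjugate of J inside S equals J
  have key : ∀ x : G, MulAut.conj x • J ≤ (S : Subgroup G) → MulAut.conj x • J = J := by
    intro x hx
    have hmem : (MulAut.conj x • J : Subgroup G) ∈
        {A : Subgroup G | A ≤ (S : Subgroup G) ∧ IsMulCommutative A ∧
          ∀ B : Subgroup G, B ≤ (S : Subgroup G) → IsMulCommutative B → Nat.card B ≤ Nat.card A} :=
      ⟨hx, hcomm_smul x, fun B hB hBc => (hJcard B hB hBc).trans_eq (hcard_smul x).symm⟩
    have hle : MulAut.conj x • J ≤ J := by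
      conv_rhs => rw [hJdef, ThompsonSubgroup]
      exact le_iSup₂ (f := fun A _ => A) _ hmem
    exact Subgroup.eq_of_le_of_card_ge hle (hcard_smul x).ge
  -- weak closure relative to any Sylow subgroup
  have key2 : ∀ (x : G) (T : Sylow p G), J ≤ (T : Subgroup G) →
      MulAut.conj x • J ≤ (T : Subgroup G) → MulAut.conj x • J = J := by
    intro x T hJT hxT
    obtain ⟨y, hy⟩ := MulAction.exists_smul_eq G S T
    have hTS : (T : Subgroup G) = MulAut.conj y • (S : Subgroup G) := by
      rw [← hy]; rfl
    have h1 : MulAut.conj (y⁻¹ * x) • J ≤ (S : Subgroup G) := by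
      have := Subgroup.pointwise_smul_le_pointwise_smul_iff
        (a := MulAut.conj y⁻¹) (S := MulAut.conj x • J) (T := (T : Subgroup G)) |>.mpr hxT
      rwa [smul_smul, ← map_mul, hTS, smul_smul, ← map_mul, inv_mul_cancel, map_one,
        one_smul] at this
    have h2 : MulAut.conj y⁻¹ • J ≤ (S : Subgroup G) := by
      have := Subgroup.pointwise_smul_le_pointwise_smul_iff
        (a := MulAut.conj y⁻¹) (S := J) (T := (T : Subgroup G)) |>.mpr hJT
      rwa [hTS, smul_smul, ← map_mul, inv_mul_cancel, map_one, one_smul] at this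
    have e1 := key _ h1
    have e2 := key _ h2
    have e3 : MulAut.conj y • J = J := by
      calc MulAut.conj y • J = MulAut.conj y • (MulAut.conj y⁻¹ • J) := by rw [e2]
        _ = J := by rw [smul_smul, ← map_mul, mul_inv_cancel, map_one, one_smul]
    calc MulAut.conj x • J = MulAut.conj y • (MulAut.conj (y⁻¹ * x) • J) := by
          rw [smul_smul, ← map_mul, mul_inv_cancel_left]
      _ = MulAut.conj y • J := by rw [e1]
      _ = J := e3
  obtain ⟨g, hg⟩ := hconj
  -- the centralizer of b
  set C : Subgroup G := Subgroup.centralizer {b} with hCdef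
  have hJC : J ≤ C := by
    intro j hj
    rw [hCdef, Subgroup.mem_centralizer_iff]
    rintro h rfl
    exact Subgroup.mul_comm_of_mem_isMulCommutative J hb hj
  have hKC : MulAut.conj g⁻¹ • J ≤ C := by
    rw [Subgroup.pointwise_smul_def]
    rintro - ⟨j, hj, rfl⟩
    rw [hCdef, Subgroup.mem_centralizer_iff]
    rintro h rfl
    have haj : a * j = j * a := Subgroup.mul_comm_of_mem_isMulCommutative J ha hj
    simp only [MulDistribMulAction.toMonoidEnd_apply, MulDistribMulAction.toMonoidHom_apply,
      MulAut.smul_def, MulAut.conj_apply, inv_inv]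
    rw [← hg]
    simp only [mul_assoc, inv_mul_cancel_left, mul_inv_cancel_left]
    rw [← mul_assoc a j g, haj, mul_assoc]
  -- Sylow theory in the centralizer
  have hJp : IsPGroup p J := S.2.to_le hJS
  have hKp : IsPGroup p (MulAut.conj g⁻¹ • J : Subgroup G) := by
    rw [Subgroup.pointwise_smul_def]; exact hJp.map _
  obtain ⟨P, hP⟩ := (hJp.comap_subtype (K := C)).exists_le_sylow
  obtain ⟨Q, hQ⟩ := (hKp.comap_subtype (K := C)).exists_le_sylow
  obtain ⟨c, hc⟩ := MulAction.exists_smul_eq (↥C) Q P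
  -- both J and the conjugate (c g⁻¹) • J lie in the p-subgroup (P : Subgroup C).map C.subtype
  have hPg : IsPGroup p ((P : Subgroup ↥C).map C.subtype) := P.2.map _
  obtain ⟨T, hT⟩ := hPg.exists_le_sylow
  have hsub : ∀ X : Subgroup G, X ≤ C → X.subgroupOf C ≤ (P : Subgroup ↥C) →
      X ≤ (P : Subgroup ↥C).map C.subtype := by
    intro X hXC hXP
    have : (X.subgroupOf C).map C.subtype ≤ (P : Subgroup ↥C).map C.subtype :=
      Subgroup.map_mono hXP
    rwa [Subgroup.subgroupOf_map_subtype, inf_eq_left.mpr hXC] at this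
  have hJT : J ≤ (T : Subgroup G) :=
    le_trans (hsub J hJC hP) hT
  have hKQ : (MulAut.conj (c : G) • (MulAut.conj g⁻¹ • J) : Subgroup G).subgroupOf C ≤
      (P : Subgroup ↥C) := by
    rw [← Subgroup.conj_smul_subgroupOf hKC c]
    calc MulAut.conj c • (MulAut.conj g⁻¹ • J).subgroupOf C
        ≤ MulAut.conj c • (Q : Subgroup ↥C) :=
          (Subgroup.pointwise_smul_le_pointwise_smul_iff).mpr hQ
      _ = (P : Subgroup ↥C) := by rw [← hc]; rfl
  have hKCc : (MulAut.conj (c : G) • (MulAut.conj g⁻¹ • J) : Subgroup G) ≤ C := by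
    rw [Subgroup.pointwise_smul_def]
    rintro - ⟨k, hk, rfl⟩
    simp only [MulDistribMulAction.toMonoidEnd_apply, MulDistribMulAction.toMonoidHom_apply,
      MulAut.smul_def, MulAut.conj_apply]
    exact C.mul_mem (C.mul_mem c.2 (hKC hk)) (C.inv_mem c.2)
  have hKT : (MulAut.conj ((c : G) * g⁻¹) • J : Subgroup G) ≤ (T : Subgroup G) := by
    have : (MulAut.conj (c : G) • (MulAut.conj g⁻¹ • J) : Subgroup G) ≤ (T : Subgroup G) :=
      le_trans (hsub _ hKCc hKQ) hT
    rwa [smul_smul, ← map_mul] at this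
  -- weak closure gives normalization
  have hfix : MulAut.conj ((c : G) * g⁻¹) • J = J := key2 _ T hJT hKT
  -- the required element
  refine ⟨((c : G) * g⁻¹)⁻¹, ?_, ?_⟩
  · rw [Subgroup.mem_normalizer_iff]
    intro h
    set n : G := ((c : G) * g⁻¹)⁻¹ with hn
    have hfix' : MulAut.conj n • J = J := by
      calc MulAut.conj n • J = MulAut.conj n • (MulAut.conj ((c : G) * g⁻¹) • J) := by rw [hfix]
        _ = J := by rw [smul_smul, ← map_mul, hn, inv_mul_cancel, map_one, one_smul]
    constructor
    · intro hh
      have : MulAut.conj n • h ∈ MulAut.conj n • J :=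
        Subgroup.smul_mem_pointwise_smul _ _ _ hh
      rw [hfix'] at this
      simpa [MulAut.smul_def, MulAut.conj_apply, mul_assoc] using this
    · intro hh
      have : n * h * n⁻¹ ∈ MulAut.conj n • J := by rw [hfix']; exact hh
      rw [Subgroup.mem_pointwise_smul_iff_inv_smul_mem] at this
      simpa [MulAut.smul_def, MulAut.conj_apply, mul_assoc] using this
  · have hcb : b * (c : G) = (c : G) * b :=
      Subgroup.mem_centralizer_iff.mp c.2 b rfl
    have : (((c : G) * g⁻¹)⁻¹)⁻¹ * a * ((c : G) * g⁻¹)⁻¹ = (c : G) * b * (c : G)⁻¹ := by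
      rw [inv_inv, ← hg]; group
    rw [this, ← hcb, mul_assoc, mul_inv_cancel, mul_one]
end

section
/- Let G be a finite group with a normal elementary abelian 2-subgroup V and let r ∈ G be an involution such that C_V(r) = [V, r]. Then every involution in the coset Vr is conjugate to r by an element of V. -/
theorem stmt_1 {G : Type*} [Group G] [Finite G]
    (V : Subgroup G) (hVn : V.Normal) (hV2 : ∀ v ∈ V, v * v = 1)
    {r : G} (hr : r * r = 1) (hr1 : r ≠ 1)
    (hCV : ∀ v ∈ V, (r * v = v * r ↔ v ∈ ⁅V, Subgroup.closure {r}⁆))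
    {t : G} (ht : t * t = 1) (ht1 : t ≠ 1) (htc : ∃ v ∈ V, t = v * r) :
    ∃ q ∈ V, q⁻¹ * r * q = t := by
  obtain ⟨v, hvV, htvr⟩ := htc
  have hinv : ∀ x ∈ V, x⁻¹ = x := by
    intro x hx
    exact inv_eq_of_mul_eq_one_right (hV2 x hx)
  have hrinv : r⁻¹ = r := inv_eq_of_mul_eq_one_right hr
  have hcomm : ∀ a ∈ V, ∀ b ∈ V, a * b = b * a := by
    intro a ha b hb
    have h3 := hV2 (a * b) (V.mul_mem ha hb)
    calc a * b = (a * b)⁻¹ := eq_inv_of_mul_eq_one_left h3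
    _ = b⁻¹ * a⁻¹ := by group
    _ = b * a := by rw [hinv a ha, hinv b hb]
  have hrv : r * v = v * r := by
    have h : v * r * (v * r) = 1 := by rw [← htvr]; exact ht
    have h2 : v⁻¹ * (v * r * (v * r)) * r⁻¹ = v⁻¹ * 1 * r⁻¹ := by rw [h]
    have h3 : r * v = v⁻¹ * r⁻¹ := by
      rw [mul_one] at h2
      calc r * v = v⁻¹ * (v * r * (v * r)) * r⁻¹ := by group
      _ = v⁻¹ * r⁻¹ := h2
    rw [h3, hinv v hvV, hrinv]
  have hvW := (hCV v hvV).mp hrv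
  -- the set of elements q * r * q⁻¹ * r⁻¹, q ∈ V, is a subgroup
  let W : Subgroup G := {
    carrier := {x | ∃ q ∈ V, x = q * r * q⁻¹ * r⁻¹}
    one_mem' := ⟨1, V.one_mem, by group⟩
    mul_mem' := by
      rintro x y ⟨a, ha, rfl⟩ ⟨b, hb, rfl⟩
      refine ⟨a * b, V.mul_mem ha hb, ?_⟩
      have ha' : r * a⁻¹ * r⁻¹ ∈ V := hVn.conj_mem a⁻¹ (V.inv_mem ha) r
      have hb' : r * b⁻¹ * r⁻¹ ∈ V := hVn.conj_mem b⁻¹ (V.inv_mem hb) r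
      have key : (r * a⁻¹ * r⁻¹) * (b * (r * b⁻¹ * r⁻¹)) =
          (b * (r * b⁻¹ * r⁻¹)) * (r * a⁻¹ * r⁻¹) :=
        hcomm _ ha' _ (V.mul_mem hb hb')
      calc a * r * a⁻¹ * r⁻¹ * (b * r * b⁻¹ * r⁻¹)
          = a * ((r * a⁻¹ * r⁻¹) * (b * (r * b⁻¹ * r⁻¹))) := by group
      _ = a * ((b * (r * b⁻¹ * r⁻¹)) * (r * a⁻¹ * r⁻¹)) := by rw [key]
      _ = a * b * r * (a * b)⁻¹ * r⁻¹ := by group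
    inv_mem' := by
      rintro x ⟨a, ha, rfl⟩
      refine ⟨a, ha, ?_⟩
      have hx : a * r * a⁻¹ * r⁻¹ ∈ V := by
        have : (a * r * a⁻¹ * r⁻¹) = a * (r * a⁻¹ * r⁻¹) := by group
        rw [this]
        exact V.mul_mem ha (hVn.conj_mem a⁻¹ (V.inv_mem ha) r)
      rw [hinv _ hx]
  }
  have hle : ⁅V, Subgroup.closure {r}⁆ ≤ W := by
    rw [Subgroup.commutator_le]
    intro g hg s hs
    have hs' : s = 1 ∨ s = r := by
      induction hs using Subgroup.closure_induction with
      | mem x hx => right; simpa using hx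
      | one => left; rfl
      | mul x y hx hy ihx ihy =>
        rcases ihx with rfl | rfl <;> rcases ihy with rfl | rfl <;> simp [hr]
      | inv x hx ih =>
        rcases ih with rfl | rfl
        · left; simp
        · right; rw [hrinv]
    rcases hs' with rfl | rfl
    · open scoped commutatorElement in have : ⁅g, (1:G)⁆ = 1 := by simp
      rw [this]; exact W.one_mem
    · exact ⟨g, hg, by rw [commutatorElement_def]⟩
  obtain ⟨q, hq, hvq⟩ := hle hvW
  refine ⟨q, hq, ?_⟩
  rw [htvr, hvq, hinv q hq, hrinv]
  simp [mul_assoc, hr]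
end

section
/- Let G be a finite group with a normal elementary abelian 2-subgroup V and let r ∈ G be an involution such that C_V(r) = [V, r]. Then |C_G(r)| = |C_V(r)| · |C_{G/V}(Vr)|, i.e., C_G(r)/C_V(r) is isomorphic to the centralizer in G/V of the image of r. -/
theorem stmt_2 {G : Type*} [Group G] [Finite G]
    (V : Subgroup G) [V.Normal] (hV2 : ∀ v ∈ V, v * v = 1)
    {r : G} (hr : r * r = 1) (hr1 : r ≠ 1)
    (hCV : ∀ v ∈ V, (r * v = v * r ↔ v ∈ ⁅V, Subgroup.closure {r}⁆)) :
    Nat.card ↥(Subgroup.centralizer ({r} : Set G)) =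
      Nat.card ↥(V ⊓ Subgroup.centralizer ({r} : Set G)) *
        Nat.card ↥(Subgroup.centralizer ({QuotientGroup.mk r} : Set (G ⧸ V))) := by
  have hrinv : r⁻¹ = r := by rw [inv_eq_iff_mul_eq_one]; exact hr
  have hr' : ∀ x : G, r * (r * x) = x := by
    intro x; rw [← mul_assoc, hr, one_mul]
  have hVinv : ∀ v ∈ V, v⁻¹ = v := fun v hv => by
    rw [inv_eq_iff_mul_eq_one]; exact hV2 v hv
  -- V is commutative
  have hVcomm : ∀ u ∈ V, ∀ v ∈ V, u * v = v * u := by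
    intro u hu v hv
    have h1 := hVinv _ (V.mul_mem hu hv)
    calc u * v = (u * v)⁻¹ := h1.symm
    _ = v⁻¹ * u⁻¹ := mul_inv_rev u v
    _ = v * u := by rw [hVinv u hu, hVinv v hv]
  have hconj : ∀ v ∈ V, r * v * r ∈ V := by
    intro v hv
    have := Subgroup.Normal.conj_mem ‹V.Normal› v hv r
    rwa [hrinv] at this
  -- the subgroup of elements of the form v⁻¹ * r * v * r
  let W : Subgroup G :=
    { carrier := {x | ∃ v ∈ V, x = v⁻¹ * (r * v * r)},
      one_mem' := ⟨1, V.one_mem, by simp [hr]⟩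
      mul_mem' := by
        rintro x y ⟨u, hu, rfl⟩ ⟨v, hv, rfl⟩
        refine ⟨u * v, V.mul_mem hu hv, ?_⟩
        have key : ∀ a ∈ V, ∀ b ∈ V, u⁻¹ * a * (v⁻¹ * b) = (u * v)⁻¹ * (a * b) := by
          intro a ha b hb
          rw [mul_inv_rev]
          calc u⁻¹ * a * (v⁻¹ * b) = u⁻¹ * ((a * v⁻¹) * b) := by group
            _ = u⁻¹ * ((v⁻¹ * a) * b) := by rw [hVcomm a ha v⁻¹ (V.inv_mem hv)]
            _ = (u⁻¹ * v⁻¹) * (a * b) := by group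
            _ = (v⁻¹ * u⁻¹) * (a * b) := by
                rw [hVcomm u⁻¹ (V.inv_mem hu) v⁻¹ (V.inv_mem hv)]
        have h4 : (r * u * r) * (r * v * r) = r * (u * v) * r := by
          have e1 : (r * u * r) * (r * v * r) = r * (u * (r * (r * (v * r)))) := by group
          rw [e1, hr']
          group
        calc u⁻¹ * (r * u * r) * (v⁻¹ * (r * v * r))
            = (u * v)⁻¹ * ((r * u * r) * (r * v * r)) :=
              key _ (hconj u hu) _ (hconj v hv)
          _ = (u * v)⁻¹ * (r * (u * v) * r) := by rw [h4]
      inv_mem' := by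
        rintro x ⟨v, hv, rfl⟩
        have hx : v⁻¹ * (r * v * r) ∈ V := V.mul_mem (V.inv_mem hv) (hconj v hv)
        rw [hVinv _ hx]
        exact ⟨v, hv, rfl⟩ }
  -- closure {r} has only 1 and r
  have hclos : ∀ k ∈ Subgroup.closure ({r} : Set G), k = 1 ∨ k = r := by
    intro k hk
    obtain ⟨n, hn⟩ := Subgroup.mem_closure_singleton.mp hk
    have hr2 : r ^ (2 : ℤ) = 1 := by
      rw [show (2 : ℤ) = ((2 : ℕ) : ℤ) by norm_num, zpow_natCast, pow_two]; exact hr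
    rcases Int.even_or_odd n with ⟨m, hm⟩ | ⟨m, hm⟩
    · left
      rw [← hn, hm, show m + m = 2 * m by ring, zpow_mul, hr2, one_zpow]
    · right
      rw [← hn, hm, zpow_add, zpow_mul, hr2, one_zpow, zpow_one, one_mul]
  -- the commutator is contained in W
  have hle : ⁅V, Subgroup.closure ({r} : Set G)⁆ ≤ W := by
    rw [Subgroup.commutator_le]
    intro v hv k hk
    rcases hclos k hk with rfl | rfl
    · simpa using W.one_mem
    · refine ⟨v⁻¹, V.inv_mem hv, ?_⟩
      rw [commutatorElement_def, hrinv]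
      group
  -- the homomorphism from the centralizer to the quotient
  set C := Subgroup.centralizer ({r} : Set G) with hC
  let f : C →* G ⧸ V := (QuotientGroup.mk' V).comp C.subtype
  -- kernel computation
  have hker : Nat.card f.ker = Nat.card ↥(V ⊓ C) := by
    refine Nat.card_congr ⟨fun x => ⟨x.1.1, ?_, x.1.2⟩, fun y =>
      ⟨⟨y.1, (Subgroup.mem_inf.mp y.2).2⟩, ?_⟩, fun x => rfl, fun y => rfl⟩
    · have hx := x.2
      rw [MonoidHom.mem_ker] at hx
      exact (QuotientGroup.eq_one_iff _).mp hx
    · rw [MonoidHom.mem_ker]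
      exact (QuotientGroup.eq_one_iff _).mpr (Subgroup.mem_inf.mp y.2).1
  -- range computation
  have hrange : f.range = Subgroup.centralizer ({(QuotientGroup.mk r : G ⧸ V)} : Set (G ⧸ V)) := by
    apply le_antisymm
    · rintro x ⟨c, rfl⟩
      rw [Subgroup.mem_centralizer_iff]
      rintro h rfl
      have hc : r * c.1 = c.1 * r := Subgroup.mem_centralizer_iff.mp c.2 r rfl
      show ((r : G) : G ⧸ V) * ((c : G) : G ⧸ V) = ((c : G) : G ⧸ V) * ((r : G) : G ⧸ V)
      rw [← QuotientGroup.mk_mul, ← QuotientGroup.mk_mul, hc]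
    · intro q hq
      rw [Subgroup.mem_centralizer_iff] at hq
      obtain ⟨g, rfl⟩ := QuotientGroup.mk_surjective q
      have hcomm := hq (QuotientGroup.mk r) rfl
      rw [← QuotientGroup.mk_mul, ← QuotientGroup.mk_mul, QuotientGroup.eq] at hcomm
      set w := (r * g)⁻¹ * (g * r) with hw
      have hwV : w ∈ V := hcomm
      have hw' : w = g⁻¹ * r * g * r := by
        rw [hw, mul_inv_rev, hrinv]; group
      have hwinv : w⁻¹ = w := hVinv w hwV
      -- w commutes with r
      have ht : (r * w * r) * w = 1 := by
        rw [hw']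
        simp only [mul_assoc, hr', mul_inv_cancel_left, inv_mul_cancel_left, hr,
          one_mul, mul_one, inv_mul_cancel, mul_inv_cancel]
      have hrr : r * w * r = w := by
        rw [eq_inv_of_mul_eq_one_left ht, hwinv]
      have hwr : r * w = w * r := by
        calc r * w = (r * w * r) * r⁻¹ := by group
          _ = w * r⁻¹ := by rw [hrr]
          _ = w * r := by rw [hrinv]
      obtain ⟨v, hv, hveq⟩ := hle ((hCV w hwV).mp hwr)
      -- g * v⁻¹ is the desired centralizing element
      have hs : g⁻¹ * r * g = v⁻¹ * r * v := by
        have h2 : w * r⁻¹ = g⁻¹ * r * g := by rw [hw']; group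
        have h3 : w * r⁻¹ = v⁻¹ * r * v := by rw [hveq]; group
        rw [← h2, h3]
      have hgc : r * (g * v⁻¹) = (g * v⁻¹) * r := by
        calc r * (g * v⁻¹) = g * (g⁻¹ * r * g) * v⁻¹ := by group
          _ = g * (v⁻¹ * r * v) * v⁻¹ := by rw [hs]
          _ = (g * v⁻¹) * r := by group
      refine ⟨⟨g * v⁻¹, ?_⟩, ?_⟩
      · exact Subgroup.mem_centralizer_iff.mpr (by rintro h rfl; exact hgc)
      · show QuotientGroup.mk (g * v⁻¹) = QuotientGroup.mk g
        rw [QuotientGroup.eq]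
        have he : (g * v⁻¹)⁻¹ * g = v := by group
        rw [he]; exact hv
  have hcard := Subgroup.card_eq_card_quotient_mul_card_subgroup f.ker
  have hquot : Nat.card (C ⧸ f.ker) = Nat.card f.range :=
    Nat.card_congr (QuotientGroup.quotientKerEquivRange f).toEquiv
  rw [hcard, hquot, hker, hrange, mul_comm]
end

section
/- Let G be a finite group with a normal elementary abelian 2-subgroup V of order 2^n. Suppose t, w ∈ G are such that the coset Vt has order two in G/V, the coset Vw has order three in G/V, and Vt inverts Vw in G/V. If |C_V(w)| = 2^a, then |C_V(t)| ≤ 2^{(n+a)/2}. -/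
theorem stmt_3 {G : Type*} [Group G] [Finite G]
    (V : Subgroup G) [V.Normal] (hV2 : ∀ v ∈ V, v * v = 1)
    {n a : ℕ} (hVcard : Nat.card V = 2 ^ n)
    {t w : G}
    (hto : orderOf (QuotientGroup.mk t : G ⧸ V) = 2)
    (hwo : orderOf (QuotientGroup.mk w : G ⧸ V) = 3)
    (hinv : (QuotientGroup.mk t : G ⧸ V)⁻¹ * QuotientGroup.mk w * QuotientGroup.mk t
      = (QuotientGroup.mk w : G ⧸ V)⁻¹)
    (hCw : Nat.card ↥(V ⊓ Subgroup.centralizer ({w} : Set G)) = 2 ^ a) :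
    Nat.card ↥(V ⊓ Subgroup.centralizer ({t} : Set G)) ≤ 2 ^ ((n + a) / 2) := by
  classical
  -- V is elementary abelian
  have hVinv : ∀ v ∈ V, v⁻¹ = v := fun v hv => inv_eq_of_mul_eq_one_right (hV2 v hv)
  have hVcomm : ∀ x ∈ V, ∀ y ∈ V, x * y = y * x := by
    intro x hx y hy
    have h1 : (x * y)⁻¹ = x * y := hVinv _ (V.mul_mem hx hy)
    calc x * y = x⁻¹ * y⁻¹ := by rw [hVinv _ hx, hVinv _ hy]
      _ = (y * x)⁻¹ := (mul_inv_rev y x).symm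
      _ = y * x := hVinv _ (V.mul_mem hy hx)
  -- membership facts
  have hw3 : w ^ 3 ∈ V := by
    rw [← QuotientGroup.eq_one_iff]
    have h := pow_orderOf_eq_one (QuotientGroup.mk w : G ⧸ V)
    rw [hwo] at h
    simpa using h
  have ht2 : t ^ 2 ∈ V := by
    rw [← QuotientGroup.eq_one_iff]
    have h := pow_orderOf_eq_one (QuotientGroup.mk t : G ⧸ V)
    rw [hto] at h
    simpa using h
  have htinv : (QuotientGroup.mk t : G ⧸ V)⁻¹ = QuotientGroup.mk t := by
    have h := pow_orderOf_eq_one (QuotientGroup.mk t : G ⧸ V)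
    rw [hto, pow_two] at h
    exact inv_eq_of_mul_eq_one_right h
  have htwt : t * w * t⁻¹ * w ∈ V := by
    rw [← QuotientGroup.eq_one_iff]
    have key : (QuotientGroup.mk t : G ⧸ V) * QuotientGroup.mk w * QuotientGroup.mk t
        = (QuotientGroup.mk w : G ⧸ V)⁻¹ := by
      have h := hinv
      rw [htinv] at h
      exact h
    have e : ((t * w * t⁻¹ * w : G) : G ⧸ V)
        = (QuotientGroup.mk t * QuotientGroup.mk w * QuotientGroup.mk t) * QuotientGroup.mk w := by
      simp only [QuotientGroup.mk_mul, QuotientGroup.mk_inv, htinv]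
    rw [e, key, inv_mul_cancel]
  -- conjugation maps on V
  have hconj : ∀ (g : G), ∀ v ∈ V, g * v * g⁻¹ ∈ V := fun g v hv =>
    (by infer_instance : V.Normal).conj_mem v hv g
  letI instCG : CommGroup ↥V :=
    { (inferInstance : Group ↥V) with
      mul_comm := fun x y => Subtype.ext (hVcomm x x.2 y y.2) }
  let Wf : ↥V →* ↥V := MonoidHom.mk' (fun x => ⟨w * x * w⁻¹, hconj w x x.2⟩)
    (fun x y => by ext; show w * (↑x * ↑y) * w⁻¹ = (w * ↑x * w⁻¹) * (w * ↑y * w⁻¹); group)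
  let Tf : ↥V →* ↥V := MonoidHom.mk' (fun x => ⟨t * x * t⁻¹, hconj t x x.2⟩)
    (fun x y => by ext; show t * (↑x * ↑y) * t⁻¹ = (t * ↑x * t⁻¹) * (t * ↑y * t⁻¹); group)
  have hWcoe : ∀ x : ↥V, (Wf x : G) = w * x * w⁻¹ := fun x => rfl
  have hTcoe : ∀ x : ↥V, (Tf x : G) = t * x * t⁻¹ := fun x => rfl
  have sq1 : ∀ x : ↥V, x * x = 1 := fun x => Subtype.ext (by
    show (x : G) * x = 1
    exact hV2 _ x.2)
  have inv1 : ∀ x : ↥V, x⁻¹ = x := fun x => inv_eq_of_mul_eq_one_right (sq1 x)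
  -- W has order dividing 3
  have hW3 : ∀ x : ↥V, Wf (Wf (Wf x)) = x := by
    intro x
    ext
    rw [hWcoe, hWcoe, hWcoe]
    have e : w * (w * (w * (x : G) * w⁻¹) * w⁻¹) * w⁻¹ = w ^ 3 * (x : G) * (w ^ 3)⁻¹ := by
      rw [show (w : G) ^ 3 = w * w * w by rw [pow_succ, pow_two]]; group
    rw [e, hVcomm _ hw3 _ x.2, mul_inv_cancel_right]
  -- T is an involution
  have hT2 : ∀ x : ↥V, Tf (Tf x) = x := by
    intro x
    ext
    rw [hTcoe, hTcoe]
    have e : t * (t * (x : G) * t⁻¹) * t⁻¹ = t ^ 2 * (x : G) * (t ^ 2)⁻¹ := by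
      rw [pow_two]; group
    rw [e, hVcomm _ ht2 _ x.2, mul_inv_cancel_right]
  -- the braid relation T W = W² T
  have hTW : ∀ x : ↥V, Tf (Wf x) = Wf (Wf (Tf x)) := by
    intro x
    ext
    rw [hTcoe, hWcoe, hWcoe, hWcoe, hTcoe]
    have hy : t * (x : G) * t⁻¹ ∈ V := hconj t _ x.2
    have hy' : w⁻¹ * (t * (x : G) * t⁻¹) * w ∈ V := by
      have := hconj w⁻¹ _ hy
      rwa [inv_inv] at this
    have e1 : t * (w * (x : G) * w⁻¹) * t⁻¹
        = (t * w * t⁻¹ * w) * (w⁻¹ * (t * (x : G) * t⁻¹) * w) * (t * w * t⁻¹ * w)⁻¹ := by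
      group
    have e2 : w * (w * (t * (x : G) * t⁻¹) * w⁻¹) * w⁻¹
        = w ^ 3 * (w⁻¹ * (t * (x : G) * t⁻¹) * w) * (w ^ 3)⁻¹ := by
      rw [show (w : G) ^ 3 = w * w * w by rw [pow_succ, pow_two]]; group
    rw [e1, e2, hVcomm _ htwt _ hy', hVcomm _ hw3 _ hy', mul_inv_cancel_right,
      mul_inv_cancel_right]
  -- the homomorphisms N = 1·W·W², D = 1·W, Q = 1·T
  let Nf : ↥V →* ↥V := MonoidHom.id ↥V * Wf * Wf.comp Wf
  let Df : ↥V →* ↥V := MonoidHom.id ↥V * Wf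
  let Qf : ↥V →* ↥V := MonoidHom.id ↥V * Tf
  have hNapp : ∀ x : ↥V, Nf x = x * Wf x * Wf (Wf x) := fun x => rfl
  have hDapp : ∀ x : ↥V, Df x = x * Wf x := fun x => rfl
  have hQapp : ∀ x : ↥V, Qf x = x * Tf x := fun x => rfl
  have memD : ∀ x : ↥V, x ∈ Df.ker ↔ Wf x = x := by
    intro x
    rw [MonoidHom.mem_ker, hDapp]
    constructor
    · intro h
      have := inv_eq_of_mul_eq_one_right h
      rw [inv1] at this
      exact this.symm
    · intro h; rw [h]; exact sq1 x
  have memQ : ∀ x : ↥V, x ∈ Qf.ker ↔ Tf x = x := by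
    intro x
    rw [MonoidHom.mem_ker, hQapp]
    constructor
    · intro h
      have := inv_eq_of_mul_eq_one_right h
      rw [inv1] at this
      exact this.symm
    · intro h; rw [h]; exact sq1 x
  -- N ∘ W = N
  have hNW : ∀ x : ↥V, Nf (Wf x) = Nf x := by
    intro x
    rw [hNapp, hNapp, hW3]
    exact (mul_rotate x (Wf x) (Wf (Wf x))).symm
  -- range N = ker D
  have hND : ∀ x : ↥V, Df (Nf x) = 1 := by
    intro x
    rw [hDapp]
    have : Wf (Nf x) = Nf x := by
      rw [hNapp, map_mul, map_mul, hW3]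
      exact (mul_rotate x (Wf x) (Wf (Wf x))).symm
    rw [this]; exact sq1 _
  have hrange : Nf.range = Df.ker := by
    ext x
    constructor
    · rintro ⟨y, rfl⟩
      exact MonoidHom.mem_ker.mpr (by
        have := hND y
        rwa [hDapp] at this ⊢)
    · intro hx
      refine ⟨x, ?_⟩
      have hWx : Wf x = x := (memD x).mp hx
      rw [hNapp, hWx, hWx, sq1, one_mul]
  have h1 : 2 ^ n = Nat.card Nf.ker * 2 ^ a := by
    have e : Nat.card ↥V = Nat.card Nf.ker * Nat.card Nf.range := by
      rw [Subgroup.card_eq_card_quotient_mul_card_subgroup Nf.ker,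
        Nat.card_congr (QuotientGroup.quotientKerEquivRange Nf).toEquiv, Nat.mul_comm]
    rw [hrange] at e
    -- Nat.card Df.ker = 2 ^ a
    have hDF : Nat.card Df.ker = 2 ^ a := by
      have heq : Df.ker = (V ⊓ Subgroup.centralizer ({w} : Set G)).subgroupOf V := by
        ext x
        rw [memD, Subgroup.mem_subgroupOf, Subgroup.mem_inf]
        constructor
        · intro h
          refine ⟨x.2, Subgroup.mem_centralizer_iff.mpr ?_⟩
          intro h' hh'
          rw [Set.mem_singleton_iff] at hh'
          rw [hh']
          have hfix : w * (x : G) * w⁻¹ = x := by rw [← hWcoe, h]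
          calc w * (x : G) = (w * x * w⁻¹) * w := by group
            _ = (x : G) * w := by rw [hfix]
        · rintro ⟨-, hc⟩
          ext
          rw [hWcoe]
          have hcw : w * (x : G) = (x : G) * w := Subgroup.mem_centralizer_iff.mp hc w rfl
          rw [hcw, mul_inv_cancel_right]
      rw [heq, Nat.card_congr (Subgroup.subgroupOfEquivOfLe inf_le_left).toEquiv, hCw]
    rw [hDF] at e
    rw [← hVcard]; exact e
  -- the centralizer of t corresponds to ker Q
  have hQcard : Nat.card ↥(V ⊓ Subgroup.centralizer ({t} : Set G)) = Nat.card Qf.ker := by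
    have heq : Qf.ker = (V ⊓ Subgroup.centralizer ({t} : Set G)).subgroupOf V := by
      ext x
      rw [memQ, Subgroup.mem_subgroupOf, Subgroup.mem_inf]
      constructor
      · intro h
        refine ⟨x.2, Subgroup.mem_centralizer_iff.mpr ?_⟩
        intro h' hh'
        rw [Set.mem_singleton_iff] at hh'
        rw [hh']
        have hfix : t * (x : G) * t⁻¹ = x := by rw [← hTcoe, h]
        calc t * (x : G) = (t * x * t⁻¹) * t := by group
          _ = (x : G) * t := by rw [hfix]
      · rintro ⟨-, hc⟩
        ext
        rw [hTcoe]
        have hct : t * (x : G) = (x : G) * t := Subgroup.mem_centralizer_iff.mp hc t rfl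
        rw [hct, mul_inv_cancel_right]
    rw [heq, Nat.card_congr (Subgroup.subgroupOfEquivOfLe inf_le_left).toEquiv]
  -- restriction of N to ker Q
  set NC := Nf.comp Qf.ker.subtype with hNC
  set K := Qf.ker ⊓ Nf.ker with hK
  have h2 : Nat.card Qf.ker = Nat.card NC.ker * Nat.card NC.range := by
    rw [Subgroup.card_eq_card_quotient_mul_card_subgroup NC.ker,
      Nat.card_congr (QuotientGroup.quotientKerEquivRange NC).toEquiv, Nat.mul_comm]
  have h3 : Nat.card NC.range ≤ 2 ^ a := by
    have hle : NC.range ≤ Df.ker := by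
      rintro x ⟨y, rfl⟩
      rw [MonoidHom.mem_ker]
      have := hND ((Qf.ker.subtype) y)
      simpa [hNC] using this
    calc Nat.card NC.range ≤ Nat.card Df.ker := Subgroup.card_le_of_le hle
      _ = 2 ^ a := by
        have e : Nat.card ↥V = Nat.card Nf.ker * Nat.card Nf.range := by
          rw [Subgroup.card_eq_card_quotient_mul_card_subgroup Nf.ker,
            Nat.card_congr (QuotientGroup.quotientKerEquivRange Nf).toEquiv, Nat.mul_comm]
        rw [hrange] at e
        have e2 : Nat.card Nf.ker * Nat.card Df.ker = Nat.card Nf.ker * 2 ^ a := by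
          rw [← e, hVcard]; exact h1
        have hpos : 0 < Nat.card Nf.ker := Nat.card_pos
        exact Nat.eq_of_mul_eq_mul_left hpos e2
  have h4 : Nat.card NC.ker = Nat.card K := by
    have e1 : NC.ker = Nf.ker.comap Qf.ker.subtype := (MonoidHom.comap_ker _ _).symm
    have e2 : Nf.ker.comap Qf.ker.subtype = K.subgroupOf Qf.ker := by
      ext x
      rw [Subgroup.mem_comap, Subgroup.mem_subgroupOf, hK, Subgroup.mem_inf]
      exact ⟨fun h => ⟨x.2, h⟩, fun h => h.2⟩
    rw [e1, e2, Nat.card_congr (Subgroup.subgroupOfEquivOfLe inf_le_left).toEquiv]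
  -- the key inequality : |K|² ≤ |ker N|
  have h5 : Nat.card K * Nat.card K ≤ Nat.card Nf.ker := by
    have hKQ : K ≤ Qf.ker := inf_le_left
    have hKN : K ≤ Nf.ker := inf_le_right
    have hmem : ∀ p : ↥K × ↥K, ((p.1 : ↥V) * Df (p.2 : ↥V)) ∈ Nf.ker := by
      intro p
      rw [MonoidHom.mem_ker, map_mul]
      have e1 : Nf (p.1 : ↥V) = 1 := MonoidHom.mem_ker.mp (hKN p.1.2)
      have e2 : Nf (p.2 : ↥V) = 1 := MonoidHom.mem_ker.mp (hKN p.2.2)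
      have e3 : Nf (Df (p.2 : ↥V)) = 1 := by
        rw [hDapp, map_mul, hNW, e2, one_mul]
      rw [e1, e3, one_mul]
    set f : ↥K × ↥K → ↥(Nf.ker) := fun p => ⟨(p.1 : ↥V) * Df (p.2 : ↥V), hmem p⟩ with hf
    have hinj : Function.Injective f := by
      intro p q hpq
      have heq : (p.1 : ↥V) * Df (p.2 : ↥V) = (q.1 : ↥V) * Df (q.2 : ↥V) := by
        have := congrArg (Subtype.val) hpq
        simpa [hf] using this
      set u : ↥V := (p.1 : ↥V) * (q.1 : ↥V) with hu
      set v : ↥V := (p.2 : ↥V) * (q.2 : ↥V) with hv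
      have huD : u = Df v := by
        have hq1 : (q.1 : ↥V) = (p.1 : ↥V) * Df (p.2 : ↥V) * Df (q.2 : ↥V) := by
          rw [heq, mul_assoc, sq1, mul_one]
        rw [hu, hq1, ← mul_assoc, ← mul_assoc, sq1, one_mul, ← map_mul]
      have huQ : u ∈ Qf.ker := Qf.ker.mul_mem (hKQ p.1.2) (hKQ q.1.2)
      have hvQ : v ∈ Qf.ker := Qf.ker.mul_mem (hKQ p.2.2) (hKQ q.2.2)
      have hvN : v ∈ Nf.ker := Nf.ker.mul_mem (hKN p.2.2) (hKN q.2.2)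
      -- T u = u gives W v = v
      have hTu : Tf u = u := (memQ u).mp huQ
      have hTv : Tf v = v := (memQ v).mp hvQ
      have e4 : v * Wf (Wf v) = v * Wf v := by
        calc v * Wf (Wf v) = Tf v * Wf (Wf (Tf v)) := by rw [hTv]
          _ = Tf v * Tf (Wf v) := by rw [hTW]
          _ = Tf (v * Wf v) := (map_mul Tf v (Wf v)).symm
          _ = Tf (Df v) := by rw [hDapp]
          _ = Tf u := by rw [huD]
          _ = u := hTu
          _ = Df v := huD
          _ = v * Wf v := hDapp v
      have e5 : Wf (Wf v) = Wf v := mul_left_cancel e4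
      have e6 : Wf v = v := by
        have h7 := congrArg Wf e5
        rw [hW3, e5] at h7
        exact h7.symm
      have hv1 : v = 1 := by
        have : Nf v = v := by rw [hNapp, e6, e6, sq1, one_mul]
        rw [MonoidHom.mem_ker.mp hvN] at this
        exact this.symm
      have hu1 : u = 1 := by rw [huD, hv1, map_one]
      have hp2 : p.2 = q.2 := by
        have : (p.2 : ↥V) = (q.2 : ↥V) := by
          have := hv1
          rw [hv] at this
          calc (p.2 : ↥V) = (p.2 : ↥V) * ((q.2 : ↥V) * (q.2 : ↥V)) := by rw [sq1, mul_one]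
            _ = ((p.2 : ↥V) * (q.2 : ↥V)) * (q.2 : ↥V) := by rw [mul_assoc]
            _ = (q.2 : ↥V) := by rw [this, one_mul]
        exact Subtype.ext this
      have hp1 : p.1 = q.1 := by
        have : (p.1 : ↥V) = (q.1 : ↥V) := by
          have := hu1
          rw [hu] at this
          calc (p.1 : ↥V) = (p.1 : ↥V) * ((q.1 : ↥V) * (q.1 : ↥V)) := by rw [sq1, mul_one]
            _ = ((p.1 : ↥V) * (q.1 : ↥V)) * (q.1 : ↥V) := by rw [mul_assoc]
            _ = (q.1 : ↥V) := by rw [this, one_mul]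
        exact Subtype.ext this
      exact Prod.ext hp1 hp2
    calc Nat.card K * Nat.card K = Nat.card (↥K × ↥K) := (Nat.card_prod _ _).symm
      _ ≤ Nat.card Nf.ker := Nat.card_le_card_of_injective f hinj
  -- final arithmetic
  have hdvd : Nat.card Qf.ker ∣ 2 ^ n := by
    rw [← hVcard]
    exact Subgroup.card_subgroup_dvd_card Qf.ker
  obtain ⟨c, hcle, hc⟩ := (Nat.dvd_prime_pow Nat.prime_two).mp hdvd
  have hsq : Nat.card Qf.ker * Nat.card Qf.ker ≤ 2 ^ (n + a) := by
    calc Nat.card Qf.ker * Nat.card Qf.ker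
        = (Nat.card NC.ker * Nat.card NC.ker) * (Nat.card NC.range * Nat.card NC.range) := by
          rw [h2]; ring
      _ ≤ (Nat.card Nf.ker) * (2 ^ a * 2 ^ a) := by
          apply Nat.mul_le_mul
          · rw [h4]; exact h5
          · exact Nat.mul_le_mul h3 h3
      _ = (Nat.card Nf.ker * 2 ^ a) * 2 ^ a := by ring
      _ = 2 ^ n * 2 ^ a := by rw [← h1]
      _ = 2 ^ (n + a) := by rw [← pow_add]
  have hcle2 : c ≤ (n + a) / 2 := by
    have : (2 : ℕ) ^ (c + c) ≤ 2 ^ (n + a) := by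
      rw [pow_add, ← hc]; exact hsq
    have := (Nat.pow_le_pow_iff_right (by norm_num : 1 < 2)).mp this
    omega
  rw [hQcard, hc]
  exact Nat.pow_le_pow_right (by norm_num) hcle2
end

section
/- Let X be a finite group with an elementary abelian normal subgroup E of order 2^{2n} such that C_X(E) = E. Let S be a Sylow 2-subgroup of X, and suppose that whenever E < R ⊴ S with R/E elementary abelian of order 2^a, one has |C_E(R)| ≤ 2^{2n-a-1}. Then E is a characteristic subgroup of S (i.e., every automorphism of S maps E to itself). -/
open scoped Pointwise


theorem stmt_4 {X : Type*} [Group X] [Finite X] {n : ℕ}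
    (E : Subgroup X) [E.Normal] (hE2 : ∀ e ∈ E, e * e = 1)
    (hEcard : Nat.card E = 2 ^ (2 * n))
    (hCE : Subgroup.centralizer (E : Set X) = E)
    (S : Sylow 2 X)
    (hyp : ∀ (a : ℕ) (R : Subgroup X), E < R → R ≤ S →
      (∀ s ∈ (S : Subgroup X), ∀ x ∈ R, s * x * s⁻¹ ∈ R) →
      (∀ x ∈ R, x * x ∈ E) →
      (∀ x ∈ R, ∀ y ∈ R, x * y * x⁻¹ * y⁻¹ ∈ E) →
      Nat.card R = 2 ^ a * Nat.card E →
      Nat.card ↥(E ⊓ Subgroup.centralizer (R : Set X)) ≤ 2 ^ (2 * n - a - 1)) :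
    ∀ φ : ↥(S : Subgroup X) ≃* ↥(S : Subgroup X),
      ∀ x : ↥(S : Subgroup X), (x : X) ∈ E → ((φ x : X) ∈ E) := by
  intro φ
  by_contra hcon
  push_neg at hcon
  obtain ⟨x₀, hx₀E, hx₀⟩ := hcon
  -- basic facts about E
  have hEinv : ∀ e ∈ E, e⁻¹ = e := fun e he => inv_eq_of_mul_eq_one_right (hE2 e he)
  have hEcomm : ∀ e ∈ E, ∀ e' ∈ E, e * e' = e' * e := by
    intro e he e' he'
    calc e * e' = (e * e')⁻¹ := (hEinv _ (mul_mem he he')).symm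
      _ = e'⁻¹ * e⁻¹ := mul_inv_rev e e'
      _ = e' * e := by rw [hEinv _ he', hEinv _ he]
  have hEnormal : E.Normal := inferInstance
  -- E is contained in S
  have hEp : IsPGroup 2 (↥E) := IsPGroup.of_card hEcard
  have hES : E ≤ (S : Subgroup X) := by
    obtain ⟨Q, hQ⟩ := hEp.exists_le_sylow
    obtain ⟨g, hg⟩ := MulAction.exists_smul_eq X Q S
    intro x hx
    rw [← hg]
    show x ∈ ((g • Q : Sylow 2 X) : Subgroup X)
    rw [Sylow.coe_subgroup_smul, Subgroup.mem_pointwise_smul_iff_inv_smul_mem]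
    exact hQ (by simpa using hEnormal.conj_mem x hx g⁻¹)
  -- the image subgroup F
  set F : Subgroup X := ((E.subgroupOf (S : Subgroup X)).map φ.toMonoidHom).map (S : Subgroup X).subtype with hF
  have hF_def : ∀ {y : X}, y ∈ F ↔ ∃ e : ↥(S : Subgroup X), (e : X) ∈ E ∧ (↑(φ e) : X) = y := by
    intro y
    simp only [hF, Subgroup.mem_map, Subgroup.mem_subgroupOf, Subgroup.coe_subtype]
    constructor
    · rintro ⟨z, ⟨e, he, hez⟩, rfl⟩
      exact ⟨e, he, congrArg Subtype.val hez⟩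
    · rintro ⟨e, he, hy⟩
      exact ⟨φ e, ⟨e, he, rfl⟩, hy⟩
  have hFS : F ≤ (S : Subgroup X) := by
    rintro y hy
    obtain ⟨e, he, rfl⟩ := hF_def.mp hy
    exact (φ e).2
  have hFsq : ∀ f ∈ F, f * f = 1 := by
    intro f hf
    obtain ⟨e, he, rfl⟩ := hF_def.mp hf
    have h1 : e * e = 1 := Subtype.ext (by simpa using hE2 _ he)
    calc (↑(φ e) : X) * ↑(φ e) = ((φ e * φ e : ↥(S : Subgroup X)) : X) := rfl
      _ = ((φ (e * e) : ↥(S : Subgroup X)) : X) := by rw [map_mul]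
      _ = 1 := by rw [h1, map_one]; rfl
  have hFcomm : ∀ f ∈ F, ∀ f' ∈ F, f * f' = f' * f := by
    intro f hf f' hf'
    obtain ⟨e, he, rfl⟩ := hF_def.mp hf
    obtain ⟨e', he', rfl⟩ := hF_def.mp hf'
    have h1 : e * e' = e' * e := Subtype.ext (hEcomm _ he _ he')
    calc (↑(φ e) : X) * ↑(φ e') = ((φ (e * e') : ↥(S : Subgroup X)) : X) := by rw [map_mul]; rfl
      _ = ((φ (e' * e) : ↥(S : Subgroup X)) : X) := by rw [h1]
      _ = (↑(φ e') : X) * ↑(φ e) := by rw [map_mul]; rfl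
  have hFnormal : ∀ s ∈ (S : Subgroup X), ∀ f ∈ F, s * f * s⁻¹ ∈ F := by
    intro s hs f hf
    obtain ⟨e, he, rfl⟩ := hF_def.mp hf
    set s' : ↥(S : Subgroup X) := ⟨s, hs⟩ with hs'
    set e' : ↥(S : Subgroup X) := φ.symm s' * e * (φ.symm s')⁻¹ with he'def
    have he' : (e' : X) ∈ E := by
      have := hEnormal.conj_mem (e : X) he (↑(φ.symm s') : X)
      simpa [he'def] using this
    refine hF_def.mpr ⟨e', he', ?_⟩
    have : φ e' = s' * φ e * s'⁻¹ := by
      rw [he'def, map_mul, map_mul, map_inv, MulEquiv.apply_symm_apply]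
    rw [this]
    rfl
  have hFE : ¬ F ≤ E := by
    intro hle
    exact hx₀ (hle (hF_def.mpr ⟨x₀, hx₀E, rfl⟩))
  -- the subgroup R = E ⊔ F
  set R : Subgroup X := E ⊔ F with hRdef
  have hR_mem : ∀ x ∈ R, ∃ e ∈ E, ∃ f ∈ F, e * f = x := by
    intro x hx
    have hx2 : x ∈ ((E : Set X) * (F : Set X)) := by
      rw [← Subgroup.normal_mul]
      exact hx
    obtain ⟨e, he, f, hf, hx'⟩ := hx2
    exact ⟨e, he, f, hf, hx'⟩
  have hRS : R ≤ (S : Subgroup X) := sup_le hES hFS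
  have hER : E < R := by
    refine lt_of_le_of_ne le_sup_left (fun h => hFE ?_)
    rw [h]
    exact le_sup_right
  have hconj : ∀ s ∈ (S : Subgroup X), ∀ x ∈ R, s * x * s⁻¹ ∈ R := by
    intro s hs x hx
    obtain ⟨e, he, f, hf, rfl⟩ := hR_mem x hx
    have : s * (e * f) * s⁻¹ = (s * e * s⁻¹) * (s * f * s⁻¹) := by group
    rw [this]
    exact mul_mem (Subgroup.mem_sup_left (hEnormal.conj_mem e he s))
      (Subgroup.mem_sup_right (hFnormal s hs f hf))
  have hsq : ∀ x ∈ R, x * x ∈ E := by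
    intro x hx
    obtain ⟨e, he, f, hf, rfl⟩ := hR_mem x hx
    have : (e * f) * (e * f) = e * (f * e * f⁻¹) * (f * f) := by group
    rw [this, hFsq f hf, mul_one]
    exact mul_mem he (hEnormal.conj_mem e he f)
  have hcommutator : ∀ x ∈ R, ∀ y ∈ R, x * y * x⁻¹ * y⁻¹ ∈ E := by
    intro x hx y hy
    obtain ⟨e, he, f, hf, rfl⟩ := hR_mem x hx
    obtain ⟨e', he', f', hf', rfl⟩ := hR_mem y hy
    rw [← QuotientGroup.eq_one_iff]
    have h1 : ((e : X) : X ⧸ E) = 1 := (QuotientGroup.eq_one_iff _).mpr he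
    have h2 : ((e' : X) : X ⧸ E) = 1 := (QuotientGroup.eq_one_iff _).mpr he'
    have h3 : ((f : X) : X ⧸ E) * ((f' : X) : X ⧸ E) =
        ((f' : X) : X ⧸ E) * ((f : X) : X ⧸ E) := by
      rw [← QuotientGroup.mk_mul, ← QuotientGroup.mk_mul, hFcomm f hf f' hf']
    simp only [QuotientGroup.mk_mul, QuotientGroup.mk_inv, mul_inv_rev, h1, h2, one_mul,
      mul_one, inv_one]
    rw [h3]
    group
  -- cardinality bookkeeping
  set m : ℕ := E.relIndex R with hm
  have hmcard : m * Nat.card E = Nat.card R := by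
    have h := Subgroup.index_mul_card (G := ↥R) (H := E.subgroupOf R)
    have hc : Nat.card (E.subgroupOf R) = Nat.card E :=
      Nat.card_congr (Subgroup.subgroupOfEquivOfLe le_sup_left).toEquiv
    rw [hc] at h
    exact h
  have hcardF : Nat.card F = 2 ^ (2 * n) := by
    have e1 : ↥E ≃ ↥(E.subgroupOf (S : Subgroup X)) := (Subgroup.subgroupOfEquivOfLe hES).symm.toEquiv
    have e2 : ↥(E.subgroupOf (S : Subgroup X)) ≃ ↥((E.subgroupOf (S : Subgroup X)).map φ.toMonoidHom) :=
      (MulEquiv.subgroupMap φ (E.subgroupOf (S : Subgroup X))).toEquiv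
    have e3 : ↥((E.subgroupOf (S : Subgroup X)).map φ.toMonoidHom) ≃ ↥F :=
      (Subgroup.equivMapOfInjective _ (S : Subgroup X).subtype (S : Subgroup X).subtype_injective).toEquiv
    rw [← hEcard]
    exact (Nat.card_congr (e1.trans (e2.trans e3))).symm
  have hmcardInf : m * Nat.card ↥(E ⊓ F) = 2 ^ (2 * n) := by
    have h1 : m = (E ⊓ F).relIndex F := by
      rw [hm, hRdef, Subgroup.relIndex_sup_left, Subgroup.inf_relIndex_right]
    have h := Subgroup.index_mul_card (G := ↥F) (H := (E ⊓ F).subgroupOf F)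
    have hc : Nat.card ((E ⊓ F).subgroupOf F) = Nat.card ↥(E ⊓ F) :=
      Nat.card_congr (Subgroup.subgroupOfEquivOfLe inf_le_right).toEquiv
    rw [hc] at h
    rw [h1]
    rw [Subgroup.relIndex] at *
    rw [h, hcardF]
  have hmdvd : m ∣ 2 ^ (2 * n) := ⟨_, hmcardInf.symm⟩
  obtain ⟨a, ha2n, hma⟩ := (Nat.dvd_prime_pow Nat.prime_two).mp hmdvd
  have hane : a ≠ 0 := by
    intro h0
    rw [h0, pow_zero] at hma
    have : R ≤ E := Subgroup.relIndex_eq_one.mp (hm ▸ hma)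
    exact hFE (le_sup_right.trans this)
  have hcardInf : Nat.card ↥(E ⊓ F) = 2 ^ (2 * n - a) := by
    have hexp : 2 ^ (2 * n) = 2 ^ a * 2 ^ (2 * n - a) := by
      rw [← pow_add]
      congr 1
      omega
    rw [hma, hexp] at hmcardInf
    exact Nat.eq_of_mul_eq_mul_left (Nat.pow_pos (n := a) (by norm_num)) hmcardInf
  -- apply the hypothesis
  have hcardR : Nat.card R = 2 ^ a * Nat.card E := by
    rw [← hmcard, hma]
  have hbound := hyp a R hER hRS hconj hsq hcommutator hcardR
  -- E ⊓ F centralizes R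
  have hcent : E ⊓ F ≤ E ⊓ Subgroup.centralizer (R : Set X) := by
    refine le_inf inf_le_left ?_
    intro g hg
    rw [Subgroup.mem_centralizer_iff]
    intro h hh
    obtain ⟨e, he, f, hf, rfl⟩ := hR_mem h hh
    calc e * f * g = e * (g * f) := by rw [mul_assoc, hFcomm f hf g (Subgroup.mem_inf.mp hg).2]
      _ = (e * g) * f := by rw [mul_assoc]
      _ = g * (e * f) := by rw [hEcomm e he g (Subgroup.mem_inf.mp hg).1, mul_assoc]
  have hle : Nat.card ↥(E ⊓ F) ≤ 2 ^ (2 * n - a - 1) :=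
    le_trans (Subgroup.card_le_of_le hcent) hbound
  rw [hcardInf] at hle
  -- case analysis on a
  by_cases hcase : a < 2 * n
  · have h1 : 2 * n - a - 1 < 2 * n - a := by omega
    have := Nat.pow_lt_pow_right (by norm_num : 1 < 2) h1
    omega
  · -- a = 2n, so E ⊓ F = ⊥ and F centralizes E
    have ha : a = 2 * n := by omega
    have hbot : E ⊓ F = ⊥ := by
      apply Subgroup.eq_bot_of_card_eq
      rw [hcardInf, ha]
      simp
    apply hFE
    intro f hf
    have hfc : f ∈ Subgroup.centralizer (E : Set X) := by
      rw [Subgroup.mem_centralizer_iff]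
      intro e he
      have hc1 : f * e * f⁻¹ * e⁻¹ ∈ E :=
        mul_mem (hEnormal.conj_mem e he f) (E.inv_mem he)
      have hc2 : f * e * f⁻¹ * e⁻¹ ∈ F := by
        have h' : e * f⁻¹ * e⁻¹ ∈ F := hFnormal e (hES he) f⁻¹ (F.inv_mem hf)
        have : f * e * f⁻¹ * e⁻¹ = f * (e * f⁻¹ * e⁻¹) := by group
        rw [this]
        exact mul_mem hf h'
      have : f * e * f⁻¹ * e⁻¹ ∈ E ⊓ F := ⟨hc1, hc2⟩
      rw [hbot, Subgroup.mem_bot] at this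
      have heq : f * e = e * f := by
        calc f * e = (f * e * f⁻¹ * e⁻¹) * (e * f) := by group
          _ = 1 * (e * f) := by rw [this]
          _ = e * f := one_mul _
      rw [heq]
    rw [hCE] at hfc
    exact hfc
end

section
/- Let G be a finite group and H ≤ G with H ≅ Alt(8). Let R ∈ Syl_3(H) (so R is elementary abelian of order 9), and suppose that for every nontrivial r ∈ R the centralizer C_G(r) is contained in H. Then R is a Sylow 3-subgroup of G. -/
/-- In a finite `p`-group, a nontrivial normal subgroup contains a nontrivial
central element. -/
lemma aux_mem_center {p : ℕ} [Fact p.Prime] {K : Type*} [Group K] [Finite K]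
    (hK : IsPGroup p K) {N : Subgroup K} [N.Normal] (hN : N ≠ ⊥) :
    ∃ r ∈ N, r ≠ 1 ∧ ∀ g : K, g * r = r * g := by
  have hNp : IsPGroup p ↥N := hK.to_subgroup N
  have hdvd : p ∣ Nat.card ↥N := by
    obtain ⟨n, hn⟩ := IsPGroup.iff_card.mp hNp
    rcases n with _ | n
    · exact absurd (Subgroup.card_eq_one.mp (by simpa using hn)) hN
    · exact hn ▸ dvd_pow_self p n.succ_ne_zero
  have hconj : IsPGroup p (ConjAct K) := hK.of_equiv ConjAct.toConjAct
  have h1 : (1 : ↥N) ∈ MulAction.fixedPoints (ConjAct K) ↥N := by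
    intro g
    apply Subtype.ext
    rw [ConjAct.Subgroup.val_conj_smul]
    simp
  obtain ⟨b, hb, hb1⟩ :=
    hconj.exists_fixed_point_of_prime_dvd_card_of_fixed_point ↥N hdvd h1
  refine ⟨(b : K), b.2, fun h => hb1 (Subtype.ext h).symm, fun g => ?_⟩
  have h2 := congrArg Subtype.val (hb (ConjAct.toConjAct g))
  rw [ConjAct.Subgroup.val_conj_smul] at h2
  simp only [ConjAct.smul_def, ConjAct.ofConjAct_toConjAct] at h2
  rw [mul_inv_eq_iff_eq_mul] at h2
  exact h2

theorem stmt_8 {G : Type*} [Group G] [Finite G]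
    (H : Subgroup G) (hH : Nonempty (↥H ≃* alternatingGroup (Fin 8)))
    (R : Sylow 3 ↥H)
    (hcent : ∀ r ∈ Subgroup.map H.subtype (R : Subgroup ↥H), r ≠ 1 →
      Subgroup.centralizer {r} ≤ H) :
    ∃ P : Sylow 3 G, (P : Subgroup G) = Subgroup.map H.subtype (R : Subgroup ↥H) := by
  classical
  have hp3 : Fact (Nat.Prime 3) := ⟨by norm_num⟩
  -- the image of R in G
  set Q : Subgroup G := Subgroup.map H.subtype (R : Subgroup ↥H) with hQdef
  -- 3 divides the order of H, so R (hence Q) is nontrivial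
  have hcardH : Nat.card ↥H = 20160 := by
    have h2 := two_mul_card_alternatingGroup (α := Fin 8)
    rw [Fintype.card_perm, Fintype.card_fin, ← Nat.card_eq_fintype_card] at h2
    have h3 : Nat.factorial 8 = 40320 := by norm_num [Nat.factorial]
    rw [Nat.card_congr hH.some.toEquiv]
    omega
  have hRbot : (R : Subgroup ↥H) ≠ ⊥ :=
    R.ne_bot_of_dvd_card (by rw [hcardH]; norm_num)
  have hQbot : Q ≠ ⊥ := by
    intro h
    apply hRbot
    rw [eq_bot_iff]
    intro x hx
    have : H.subtype x ∈ Q := Subgroup.mem_map_of_mem _ hx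
    rw [h, Subgroup.mem_bot] at this
    simpa using this
  have hQp : IsPGroup 3 Q := R.isPGroup'.map H.subtype
  obtain ⟨P, hQP⟩ := hQp.exists_le_sylow
  refine ⟨P, ?_⟩
  by_contra hne
  have hlt : Q < P := lt_of_le_of_ne hQP fun h => hne h.symm
  -- work inside P
  have hPp : IsPGroup 3 ↥(P : Subgroup G) := P.isPGroup'
  set Q' : Subgroup ↥(P : Subgroup G) := Q.subgroupOf P with hQ'def
  have hQ'top : Q' < ⊤ := by
    rw [lt_top_iff_ne_top]
    intro h
    rw [Subgroup.subgroupOf_eq_top] at h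
    exact hlt.not_ge h
  haveI : Group.IsNilpotent ↥(P : Subgroup G) := hPp.isNilpotent
  have hnc := normalizerCondition_of_isNilpotent (G := ↥(P : Subgroup G))
  have hQ'N : Q' < (Subgroup.normalizer (Q' : Set ↥(P : Subgroup G))) := hnc Q' hQ'top
  -- M is the image in G of the normalizer of Q' in P
  set M : Subgroup G := Subgroup.map (P : Subgroup G).subtype (Subgroup.normalizer (Q' : Set ↥(P : Subgroup G))) with hMdef
  have hmapQ' : Subgroup.map (P : Subgroup G).subtype Q' = Q := by
    rw [hQ'def, Subgroup.subgroupOf_map_subtype, inf_eq_left]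
    exact hQP
  have hQM : Q < M := by
    rw [← hmapQ', hMdef]
    refine lt_of_le_of_ne (Subgroup.map_mono hQ'N.le) fun h => hQ'N.ne ?_
    exact Subgroup.map_injective (P : Subgroup G).subtype_injective h
  -- find a nontrivial element of Q central in the normalizer
  have hQ'bot : Q' ≠ ⊥ := by
    intro h
    apply hQbot
    rw [← hmapQ', h, Subgroup.map_bot]
  haveI : (Q'.subgroupOf (Subgroup.normalizer (Q' : Set ↥(P : Subgroup G)))).Normal := Subgroup.normal_in_normalizer
  have hQ''bot : Q'.subgroupOf (Subgroup.normalizer (Q' : Set ↥(P : Subgroup G))) ≠ ⊥ := by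
    intro h
    rw [Subgroup.subgroupOf_eq_bot] at h
    exact hQ'bot (le_bot_iff.mp ((le_inf le_rfl hQ'N.le).trans h.le_bot))
  obtain ⟨r', hr'mem, hr'ne, hr'comm⟩ :=
    aux_mem_center (hPp.to_subgroup (Subgroup.normalizer (Q' : Set ↥(P : Subgroup G)))) hQ''bot
  -- the corresponding element of G
  set r : G := ((r' : ↥(P : Subgroup G)) : G) with hrdef
  have hrQ : r ∈ Q := by
    have : (r' : ↥(P : Subgroup G)) ∈ Q' := hr'mem
    exact this
  have hrne : r ≠ 1 := by
    intro h
    exact hr'ne (Subtype.ext (Subtype.ext h))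
  -- the normalizer's image M centralizes r, hence M ≤ H
  have hMC : M ≤ Subgroup.centralizer {r} := by
    rintro x ⟨y, hy, rfl⟩
    rw [Subgroup.mem_centralizer_singleton_iff]
    have := hr'comm ⟨y, hy⟩
    have h2 := congrArg (fun z : ↥(Subgroup.normalizer (Q' : Set ↥(P : Subgroup G))) => ((z : ↥(P : Subgroup G)) : G)) this
    simpa using h2
  have hMH : M ≤ H := (hMC.trans (hcent r hrQ hrne))
  -- pull back M to H and use maximality of R
  have hRcomap : (R : Subgroup ↥H) ≤ Subgroup.comap H.subtype M := by
    intro x hx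
    exact hQM.le (Subgroup.mem_map_of_mem _ hx)
  have hMp : IsPGroup 3 ↥M := (hPp.to_subgroup (Subgroup.normalizer (Q' : Set ↥(P : Subgroup G)))).map _
  have hcomapp : IsPGroup 3 ↥(Subgroup.comap H.subtype M) :=
    hMp.comap_of_injective H.subtype H.subtype_injective
  have hmax := R.is_maximal' hcomapp hRcomap
  have hMQ : M ≤ Q := by
    intro x hx
    have hxH : x ∈ H := hMH hx
    have : (⟨x, hxH⟩ : ↥H) ∈ Subgroup.comap H.subtype M := hx
    rw [hmax] at this
    exact ⟨⟨x, hxH⟩, this, rfl⟩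
  exact hQM.not_ge hMQ
end

section
/- Let W be a finite 3-group of order 3^5 containing a normal elementary abelian subgroup D of order 27, such that W/D is acted on transitively (on nonidentity elements) by a group of operators under which every coset of D in W contains an element of order dividing 3, and D has exponent 3. If for some a ∈ W \ D the coset Da consists of elements of order dividing 3 and the operator group is transitive on (W/D) \ {D}, then W has exponent 3. -/
theorem stmt_17 {W Γ : Type*} [Group W] [Finite W] [Group Γ]
    [MulDistribMulAction Γ W]
    (hWcard : Nat.card W = 3 ^ 5)
    (D : Subgroup W) (hDn : D.Normal) (hDcard : Nat.card D = 27)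
    (hDab : ∀ x ∈ D, ∀ y ∈ D, x * y = y * x)
    (hD3 : ∀ x ∈ D, x ^ 3 = 1)
    (hDinv : ∀ γ : Γ, ∀ d ∈ D, γ • d ∈ D)
    (htrans : ∀ x y : W, x ∉ D → y ∉ D → ∃ γ : Γ, (γ • x) * y⁻¹ ∈ D)
    (a : W) (ha : a ∉ D) (hcoset : ∀ w : W, w * a⁻¹ ∈ D → w ^ 3 = 1) :
    ∀ w : W, w ^ 3 = 1 := by
  intro w
  by_cases hw : w ∈ D
  · exact hD3 w hw
  · obtain ⟨γ, hγ⟩ := htrans w a hw ha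
    have h3 : (γ • w) ^ 3 = 1 := hcoset _ hγ
    have := MulAction.injective (β := W) γ
    apply this
    simp only []
    rw [smul_one, smul_pow']
    exact h3
end
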